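/- Let N, n ≥ 1 be integers and let ρ be a Hermitian complex matrix indexed by {0,…,N−1} → {0,1} (an operator on (ℂ²)^{⊗N}). Then (1/2^N) Σ_{a : {0,…,N−1}→{0,1,2,3}} (tr(P_a ρ))^{2n} = tr(R · L), where R and L are the matrices indexed by functions s : {0,…,2n−1}×{0,…,N−1} → {0,1} with entries R_{s,t} = Π_{k=0}^{n−1} ρ_{s(2k,·),t(2k,·)} · conj(ρ_{s(2k+1,·),t(2k+1,·)}) and L_{s,t} = Π_{j=0}^{N−1} (Λ^{(n)})_{s(·,j),t(·,j)}; here s(2k,·) denotes the N-bit configuration i ↦ s(2k,i) and s(·,j) the 2n-bit configuration k ↦ s(k,j). -/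
import Mathlib


open scoped Matrix ComplexConjugate

noncomputable section

/-- The four Pauli matrices: `σ 0 = 1`, `σ 1 = σ_x`, `σ 2 = σ_y`, `σ 3 = σ_z`. -/
def σ (α : Fin 4) : Matrix (Fin 2) (Fin 2) ℂ :=
  if α = 0 then 1
  else if α = 1 then !![0, 1; 1, 0]
  else if α = 2 then !![0, -Complex.I; Complex.I, 0]
  else !![1, 0; 0, -1]

/-- The Pauli string `P_a = σ_{a(0)} ⊗ ⋯ ⊗ σ_{a(N−1)}` on `N` qubits. -/
def pauliString (N : ℕ) (a : Fin N → Fin 4) :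
    Matrix (Fin N → Fin 2) (Fin N → Fin 2) ℂ :=
  fun s t => ∏ j, σ (a j) (s j) (t j)

/-- `Λ^{(n)} = (1/2) Σ_{α=0}^{3} (σ_α ⊗ σ̄_α)^{⊗n}`, an operator on `(ℂ²)^{⊗2n}`:
the `k`-th tensor factor of `σ_α ⊗ σ̄_α` sits on replicas `2k` and `2k+1`. -/
def Lambda (n : ℕ) : Matrix (Fin (2*n) → Fin 2) (Fin (2*n) → Fin 2) ℂ :=
  fun s t => ((1:ℂ)/2) * ∑ α : Fin 4, ∏ k : Fin n,
    σ α (s ⟨2*k.val, by have := k.isLt; omega⟩) (t ⟨2*k.val, by have := k.isLt; omega⟩) *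
    conj (σ α (s ⟨2*k.val+1, by have := k.isLt; omega⟩) (t ⟨2*k.val+1, by have := k.isLt; omega⟩))

/-- The replica matrix `R = (ρ ⊗ ρ̄)^{⊗n}`, indexed by configurations of `2n` replicas
of `N` qubits: replica `2k` carries `ρ` and replica `2k+1` carries `ρ̄`. -/
def replicaR (N n : ℕ) (ρ : Matrix (Fin N → Fin 2) (Fin N → Fin 2) ℂ) :
    Matrix (Fin (2*n) × Fin N → Fin 2) (Fin (2*n) × Fin N → Fin 2) ℂ :=
  fun s t => ∏ k : Fin n,
    ρ (fun i => s (⟨2*k.val, by have := k.isLt; omega⟩, i))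
      (fun i => t (⟨2*k.val, by have := k.isLt; omega⟩, i)) *
    conj (ρ (fun i => s (⟨2*k.val+1, by have := k.isLt; omega⟩, i))
      (fun i => t (⟨2*k.val+1, by have := k.isLt; omega⟩, i)))

/-- The tensor power `L = (Λ^{(n)})^{⊗N}`, where the copy at site `j` acts on the `2n`
replica indices of qubit `j`. -/
def replicaL (N n : ℕ) :
    Matrix (Fin (2*n) × Fin N → Fin 2) (Fin (2*n) × Fin N → Fin 2) ℂ :=
  fun s t => ∏ j : Fin N, Lambda n (fun k => s (k, j)) (fun k => t (k, j))

set_option maxHeartbeats 1000000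

/- ### auxiliary lemmas -/

lemma sigma_conj (α : Fin 4) (i j : Fin 2) : conj (σ α i j) = σ α j i := by
  fin_cases α <;> fin_cases i <;> fin_cases j <;> simp [σ, Matrix.one_apply]

lemma pi_sum_prod {κ X : Type*} [Fintype κ] [DecidableEq κ] [Fintype X] [DecidableEq X]
    (f : κ → X → ℂ) :
    ∑ g : κ → X, ∏ k : κ, f k (g k) = ∏ k : κ, ∑ x : X, f k x := by
  rw [Finset.prod_univ_sum, Fintype.piFinset_univ]

lemma sum_sum_pi_prod {κ X Y : Type*} [Fintype κ] [DecidableEq κ] [Fintype X] [DecidableEq X]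
    [Fintype Y] [DecidableEq Y] (F : X → Y → ℂ) :
    ∑ g : κ → X, ∑ h : κ → Y, ∏ k : κ, F (g k) (h k)
      = (∑ x : X, ∑ y : Y, F x y) ^ Fintype.card κ := by
  have h1 : ∀ g : κ → X, ∑ h : κ → Y, ∏ k, F (g k) (h k) = ∏ k, ∑ y, F (g k) y :=
    fun g => pi_sum_prod (fun k y => F (g k) y)
  simp_rw [h1]
  rw [pi_sum_prod (fun _ x => ∑ y, F x y), Finset.prod_const, Finset.card_univ]

lemma trace_pauli (N : ℕ) (a : Fin N → Fin 4) (ρ : Matrix (Fin N → Fin 2) (Fin N → Fin 2) ℂ) :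
    Matrix.trace (pauliString N a * ρ) =
      ∑ v : Fin N → Fin 2, ∑ u : Fin N → Fin 2, (∏ j, σ (a j) (v j) (u j)) * ρ u v := by
  simp [Matrix.trace, Matrix.mul_apply, Matrix.diag, pauliString]

lemma trace_pauli_conj (N : ℕ) (a : Fin N → Fin 4) (ρ : Matrix (Fin N → Fin 2) (Fin N → Fin 2) ℂ)
    (hρ : ρ.IsHermitian) :
    conj (Matrix.trace (pauliString N a * ρ)) = Matrix.trace (pauliString N a * ρ) := by
  rw [trace_pauli]
  simp_rw [map_sum, map_mul, map_prod, sigma_conj]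
  have h : ∀ u v, conj (ρ u v) = ρ v u := fun u v => by rw [← hρ.apply v u]; rfl
  simp_rw [h]
  exact Finset.sum_comm

/-- the reindexing equivalence grouping replicas into pairs -/
def pairEquiv (n N : ℕ) : (Fin (2*n) × Fin N → Fin 2) ≃ (Fin n → (Fin 2 × Fin N → Fin 2)) where
  toFun s := fun k p => s (⟨2*k.val + p.1.val, by have := k.isLt; have := p.1.isLt; omega⟩, p.2)
  invFun g := fun q => g ⟨q.1.val / 2, by have := q.1.isLt; omega⟩
    (⟨q.1.val % 2, by omega⟩, q.2)
  left_inv s := by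
    funext q
    exact congrArg s (Prod.ext (Fin.ext (by
      show 2 * (q.1.val / 2) + q.1.val % 2 = q.1.val
      omega)) rfl)
  right_inv g := by
    funext k p
    have h1 : (⟨(2*k.val + p.1.val) / 2, by have := k.isLt; have := p.1.isLt; omega⟩ : Fin n) = k :=
      Fin.ext (by show (2*k.val + p.1.val) / 2 = k.val; have := p.1.isLt; omega)
    have h2 : (⟨(2*k.val + p.1.val) % 2, by omega⟩ : Fin 2) = p.1 :=
      Fin.ext (by show (2*k.val + p.1.val) % 2 = p.1.val; have := p.1.isLt; omega)
    show g _ (_, p.2) = g k p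
    rw [show ((⟨(2*k.val + p.1.val) % 2, by omega⟩ : Fin 2), p.2) = p from Prod.ext h2 rfl]
    exact congrFun (congrArg g h1) p


/-- single-site factor for fixed Pauli labels -/
def Bterm (N n : ℕ) (a : Fin N → Fin 4) (s t : Fin (2*n) × Fin N → Fin 2) : ℂ :=
  ∏ j : Fin N, ∏ k : Fin n,
    σ (a j) (t (⟨2*k.val, by have := k.isLt; omega⟩, j)) (s (⟨2*k.val, by have := k.isLt; omega⟩, j)) *
    conj (σ (a j) (t (⟨2*k.val+1, by have := k.isLt; omega⟩, j)) (s (⟨2*k.val+1, by have := k.isLt; omega⟩, j)))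

lemma replicaL_eq (N n : ℕ) (t s : Fin (2*n) × Fin N → Fin 2) :
    replicaL N n t s = ((1:ℂ)/2)^N * ∑ a : Fin N → Fin 4, Bterm N n a s t := by
  simp only [replicaL, Lambda, Bterm]
  rw [Finset.prod_mul_distrib, Finset.prod_const, Finset.card_univ, Fintype.card_fin]
  congr 1
  rw [← pi_sum_prod (fun (j : Fin N) (α : Fin 4) => ∏ k : Fin n,
    σ α (t (⟨2*k.val, by have := k.isLt; omega⟩, j)) (s (⟨2*k.val, by have := k.isLt; omega⟩, j)) *
    conj (σ α (t (⟨2*k.val+1, by have := k.isLt; omega⟩, j)) (s (⟨2*k.val+1, by have := k.isLt; omega⟩, j))))]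

/-- the replica-pair factor -/
def G (N : ℕ) (ρ : Matrix (Fin N → Fin 2) (Fin N → Fin 2) ℂ) (a : Fin N → Fin 4)
    (u v : Fin 2 × Fin N → Fin 2) : ℂ :=
  (ρ (fun i => u (0,i)) (fun i => v (0,i)) * conj (ρ (fun i => u (1,i)) (fun i => v (1,i)))) *
  ∏ j : Fin N, (σ (a j) (v (0,j)) (u (0,j)) * conj (σ (a j) (v (1,j)) (u (1,j))))

def splitEquiv (N : ℕ) : ((Fin 2 × Fin N → Fin 2) × (Fin 2 × Fin N → Fin 2)) ≃
    (((Fin N → Fin 2) × (Fin N → Fin 2)) × ((Fin N → Fin 2) × (Fin N → Fin 2))) where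
  toFun uv := ((fun i => uv.2 (0,i), fun i => uv.1 (0,i)), (fun i => uv.2 (1,i), fun i => uv.1 (1,i)))
  invFun pq := (fun x => if x.1 = 0 then pq.1.2 x.2 else pq.2.2 x.2,
                fun x => if x.1 = 0 then pq.1.1 x.2 else pq.2.1 x.2)
  left_inv uv := by
    refine Prod.ext (funext fun x => ?_) (funext fun x => ?_) <;>
      (obtain ⟨b, i⟩ := x; fin_cases b <;> simp)
  right_inv pq := by
    refine Prod.ext (Prod.ext rfl rfl) (Prod.ext ?_ ?_) <;> simp

lemma Gsum (N : ℕ) (ρ : Matrix (Fin N → Fin 2) (Fin N → Fin 2) ℂ) (a : Fin N → Fin 4) :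
    ∑ u : Fin 2 × Fin N → Fin 2, ∑ v : Fin 2 × Fin N → Fin 2, G N ρ a u v
      = Matrix.trace (pauliString N a * ρ) * conj (Matrix.trace (pauliString N a * ρ)) := by
  have hTa : Matrix.trace (pauliString N a * ρ)
      = ∑ p : (Fin N → Fin 2) × (Fin N → Fin 2), (∏ j, σ (a j) (p.1 j) (p.2 j)) * ρ p.2 p.1 := by
    rw [trace_pauli, ← Fintype.sum_prod_type']
  have hTc : conj (Matrix.trace (pauliString N a * ρ))
      = ∑ q : (Fin N → Fin 2) × (Fin N → Fin 2),
          (∏ j, conj (σ (a j) (q.1 j) (q.2 j))) * conj (ρ q.2 q.1) := by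
    rw [hTa, map_sum]
    simp_rw [map_mul, map_prod]
  calc ∑ u : Fin 2 × Fin N → Fin 2, ∑ v : Fin 2 × Fin N → Fin 2, G N ρ a u v
      = ∑ uv : (Fin 2 × Fin N → Fin 2) × (Fin 2 × Fin N → Fin 2), G N ρ a uv.1 uv.2 :=
        (Fintype.sum_prod_type' _).symm
    _ = ∑ pq : ((Fin N → Fin 2) × (Fin N → Fin 2)) × ((Fin N → Fin 2) × (Fin N → Fin 2)),
          G N ρ a ((splitEquiv N).symm pq).1 ((splitEquiv N).symm pq).2 :=
        (Equiv.sum_comp (splitEquiv N).symm (fun uv => G N ρ a uv.1 uv.2)).symm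
    _ = ∑ pq : ((Fin N → Fin 2) × (Fin N → Fin 2)) × ((Fin N → Fin 2) × (Fin N → Fin 2)),
          ((∏ j, σ (a j) (pq.1.1 j) (pq.1.2 j)) * ρ pq.1.2 pq.1.1) *
          ((∏ j, conj (σ (a j) (pq.2.1 j) (pq.2.2 j))) * conj (ρ pq.2.2 pq.2.1)) := by
        refine Finset.sum_congr rfl fun pq _ => ?_
        simp only [splitEquiv, Equiv.coe_fn_symm_mk, G]
        norm_num
        rw [Finset.prod_mul_distrib]
        ring
    _ = (∑ p : (Fin N → Fin 2) × (Fin N → Fin 2), (∏ j, σ (a j) (p.1 j) (p.2 j)) * ρ p.2 p.1) *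
        (∑ q : (Fin N → Fin 2) × (Fin N → Fin 2),
          (∏ j, conj (σ (a j) (q.1 j) (q.2 j))) * conj (ρ q.2 q.1)) := by
        rw [Finset.sum_mul_sum]
        exact Fintype.sum_prod_type'
          (fun (p q : (Fin N → Fin 2) × (Fin N → Fin 2)) =>
            ((∏ j, σ (a j) (p.1 j) (p.2 j)) * ρ p.2 p.1) *
            ((∏ j, conj (σ (a j) (q.1 j) (q.2 j))) * conj (ρ q.2 q.1)))
    _ = _ := by rw [← hTa, ← hTc]

lemma inner_eq (N n : ℕ) (ρ : Matrix (Fin N → Fin 2) (Fin N → Fin 2) ℂ) (a : Fin N → Fin 4) :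
    ∑ s : Fin (2*n) × Fin N → Fin 2, ∑ t : Fin (2*n) × Fin N → Fin 2,
      replicaR N n ρ s t * Bterm N n a s t
    = (Matrix.trace (pauliString N a * ρ) * conj (Matrix.trace (pauliString N a * ρ)))^n := by
  have point : ∀ s t, replicaR N n ρ s t * Bterm N n a s t
      = ∏ k : Fin n, G N ρ a (pairEquiv n N s k) (pairEquiv n N t k) := by
    intro s t
    simp only [replicaR, Bterm, G, pairEquiv, Equiv.coe_fn_mk]
    rw [Finset.prod_comm, ← Finset.prod_mul_distrib]
    refine Finset.prod_congr rfl fun k _ => ?_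
    simp only [Fin.isValue, Fin.val_zero, Fin.val_one, add_zero]
  simp_rw [point]
  calc ∑ s, ∑ t, ∏ k : Fin n, G N ρ a (pairEquiv n N s k) (pairEquiv n N t k)
      = ∑ g : Fin n → (Fin 2 × Fin N → Fin 2), ∑ t, ∏ k, G N ρ a (g k) (pairEquiv n N t k) :=
        Equiv.sum_comp (pairEquiv n N) (fun g => ∑ t, ∏ k, G N ρ a (g k) (pairEquiv n N t k))
    _ = ∑ g : Fin n → (Fin 2 × Fin N → Fin 2), ∑ h : Fin n → (Fin 2 × Fin N → Fin 2), ∏ k, G N ρ a (g k) (h k) :=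
        Finset.sum_congr rfl fun g _ =>
          Equiv.sum_comp (pairEquiv n N) (fun h => ∏ k, G N ρ a (g k) (h k))
    _ = (∑ u, ∑ v, G N ρ a u v) ^ n := by
        rw [sum_sum_pi_prod, Fintype.card_fin]
    _ = _ := by rw [Gsum]

/-- The stabilizer purity as a replica trace:
`(1/2^N) Σ_a (tr(P_a ρ))^{2n} = tr(R·L)` for Hermitian `ρ`. -/
theorem stabilizer_purity_replica_trace (N n : ℕ) (hN : 1 ≤ N) (hn : 1 ≤ n)
    (ρ : Matrix (Fin N → Fin 2) (Fin N → Fin 2) ℂ) (hρ : ρ.IsHermitian) :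
    ((1:ℂ)/2^N) * ∑ a : Fin N → Fin 4, (Matrix.trace (pauliString N a * ρ))^(2*n) =
      Matrix.trace (replicaR N n ρ * replicaL N n) := by
  -- abbreviation
  set T : (Fin N → Fin 4) → ℂ := fun a => Matrix.trace (pauliString N a * ρ) with hT
  -- the key computation
  have key : Matrix.trace (replicaR N n ρ * replicaL N n)
      = ((1:ℂ)/2)^N * ∑ a : Fin N → Fin 4, (T a * conj (T a))^n := by
    have tr_eq : Matrix.trace (replicaR N n ρ * replicaL N n)
        = ∑ s : Fin (2*n) × Fin N → Fin 2, ∑ t, replicaR N n ρ s t * replicaL N n t s := by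
      simp [Matrix.trace, Matrix.diag, Matrix.mul_apply]
    rw [tr_eq]
    simp_rw [replicaL_eq]
    have hc : ∀ (A S : ℂ), A * (((1:ℂ)/2)^N * S) = ((1:ℂ)/2)^N * (A * S) := fun A S =>
      mul_left_comm A _ S
    simp_rw [hc, ← Finset.mul_sum]
    congr 1
    have hms : ∀ (s t : Fin (2*n) × Fin N → Fin 2),
        replicaR N n ρ s t * ∑ a : Fin N → Fin 4, Bterm N n a s t
          = ∑ a : Fin N → Fin 4, replicaR N n ρ s t * Bterm N n a s t := fun s t =>
      Finset.mul_sum _ _ _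
    simp_rw [hms]
    rw [show (∑ s : Fin (2*n) × Fin N → Fin 2, ∑ t, ∑ a : Fin N → Fin 4,
        replicaR N n ρ s t * Bterm N n a s t)
      = ∑ s : Fin (2*n) × Fin N → Fin 2, ∑ a : Fin N → Fin 4, ∑ t,
        replicaR N n ρ s t * Bterm N n a s t from
      Finset.sum_congr rfl fun s _ => Finset.sum_comm]
    rw [Finset.sum_comm]
    exact Finset.sum_congr rfl fun a _ => inner_eq N n ρ a
  rw [key]
  have h2 : ((1:ℂ)/2)^N = 1/2^N := by rw [div_pow, one_pow]
  rw [h2]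
  congr 1
  refine Finset.sum_congr rfl fun a _ => ?_
  rw [trace_pauli_conj N a ρ hρ]
  rw [pow_mul, sq]
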